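/- arXiv:1611.03058 — 4 statements merged into one kernel-verified Lean document; each statement's English description precedes it below -/
import Mathlib

section
/- Let T be a pretriangulated category and let A be a strictly full triangulated subcategory of T (closed under shifts, extensions, and isomorphisms) which is admissible, i.e. the inclusion functor A ↪ T admits both a left adjoint and a right adjoint. If A contains a spanning class Ω of T, then A = T, i.e. every object of T belongs to A. -/
open CategoryTheory Category Limits Pretriangulated

namespace CategoryTheory.Triangulated

/-- The structure `Triangulated.Subcategory` of the older Mathlib (removed since),
restated with its old fields. -/
structure Subcategory (C : Type*) [Category C] [HasZeroObject C] [HasShift C ℤ]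
    [Preadditive C] [∀ (n : ℤ), (shiftFunctor C n).Additive] [Pretriangulated C] where
  P : C → Prop
  zero' : ∃ (Z : C) (_ : IsZero Z), P Z
  shift (X : C) (n : ℤ) : P X → P (X⟦n⟧)
  ext₂' (T : Triangle C) (_ : T ∈ distTriang C) : P T.obj₁ → P T.obj₃ → ObjectProperty.isoClosure P T.obj₂

end CategoryTheory.Triangulated

/-- A class of objects `Ω` in a pretriangulated category `T` is a spanning class if
orthogonality (on either side) to all shifts of objects of `Ω` forces an object to be zero. -/
def IsSpanningClass {T : Type*} [Category T] [HasZeroObject T] [Preadditive T]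
    [HasShift T ℤ] [∀ n : ℤ, (CategoryTheory.shiftFunctor T n).Additive] [Pretriangulated T]
    (Ω : Set T) : Prop :=
  (∀ t : T, (∀ ω ∈ Ω, ∀ i : ℤ, ∀ f : t ⟶ ω⟦i⟧, f = 0) → IsZero t) ∧
  (∀ t : T, (∀ ω ∈ Ω, ∀ i : ℤ, ∀ f : ω⟦i⟧ ⟶ t, f = 0) → IsZero t)

/- Every `t` sits in a distinguished triangle `ιRt → t → c → ιRt⟦1⟧` built on the counit of the
coreflection `ι ⊣ R` onto `A`. Since `A` is closed under shifts and maps from objects of `A`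
factor uniquely through the counit, the long exact `Hom(x, -)` sequence gives `Hom(x, c) = 0`
for every `x ∈ A`, in particular for all shifts of objects of `Ω`. Hence `c = 0`, so the counit
`ιRt ≅ t` is an isomorphism and `t ∈ A`. -/

namespace CategoryTheory

lemma Adjunction.comp_counit_app_bijective {A T : Type*} [Category A] [Category T]
    {ι : A ⥤ T} {R : T ⥤ A} (adj : ι ⊣ R) (hι : ι.FullyFaithful) (a : A) (t : T) :
    Function.Bijective (fun u : ι.obj a ⟶ ι.obj (R.obj t) => u ≫ adj.counit.app t) := by
  have h : (fun u : ι.obj a ⟶ ι.obj (R.obj t) => u ≫ adj.counit.app t) =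
      hι.homEquiv.symm.trans (adj.homEquiv a t).symm := by
    funext u
    simp [Adjunction.homEquiv_counit]
  rw [h]
  exact Equiv.bijective _

section

variable {C : Type*} [Category C] [HasZeroObject C] [Preadditive C] [HasShift C ℤ]
  [∀ n : ℤ, (CategoryTheory.shiftFunctor C n).Additive] [Pretriangulated C]

lemma Pretriangulated.Triangle.eq_zero_of_comp_mor₁_surjective_of_injective (Tr : Triangle C)
    (hTr : Tr ∈ distTriang C) {W : C}
    (hsurj : Function.Surjective (fun u : W ⟶ Tr.obj₁ => u ≫ Tr.mor₁))
    (hinj : Function.Injective (fun u : W⟦(-1 : ℤ)⟧ ⟶ Tr.obj₁ => u ≫ Tr.mor₁))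
    (f : W ⟶ Tr.obj₃) : f = 0 := by
  let adj : CategoryTheory.shiftFunctor C (-1 : ℤ) ⊣ CategoryTheory.shiftFunctor C (1 : ℤ) :=
    (shiftEquiv' C (-1 : ℤ) 1 (by norm_num)).toAdjunction
  let e (Y : C) : (W⟦(-1 : ℤ)⟧ ⟶ Y) ≃+ (W ⟶ Y⟦(1 : ℤ)⟧) := adj.homAddEquiv _ _
  have he (v : W⟦(-1 : ℤ)⟧ ⟶ Tr.obj₁) : e _ (v ≫ Tr.mor₁) = e _ v ≫ Tr.mor₁⟦(1 : ℤ)⟧' :=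
    adj.homEquiv_naturality_right v Tr.mor₁
  have hfmor₃ : f ≫ Tr.mor₃ = 0 := by
    obtain ⟨v, hv⟩ := (e _).surjective (f ≫ Tr.mor₃)
    have hvmor₁ : v ≫ Tr.mor₁ = 0 := (e _).injective <| by
      rw [he, hv, map_zero, Category.assoc, comp_distTriang_mor_zero₃₁ _ hTr, comp_zero]
    rw [← hv, hinj (hvmor₁.trans zero_comp.symm), map_zero]
  obtain ⟨g, rfl⟩ := Tr.coyoneda_exact₃ hTr f hfmor₃
  obtain ⟨u, rfl⟩ := hsurj g
  simp [comp_distTriang_mor_zero₁₂ _ hTr]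

lemma Triangulated.Subcategory.hom_to_cone_counit_eq_zero (A : Triangulated.Subcategory C)
    [(ObjectProperty.ι A.P).IsLeftAdjoint] {t c : C} {g : t ⟶ c}
    {h : c ⟶ ((ObjectProperty.ι A.P).obj ((ObjectProperty.ι A.P).rightAdjoint.obj t))⟦(1 : ℤ)⟧}
    (hTr : Triangle.mk ((Adjunction.ofIsLeftAdjoint (ObjectProperty.ι A.P)).counit.app t) g h
      ∈ distTriang C) {x : C} (hx : A.P x) (f : x ⟶ c) : f = 0 := by
  have hε (y : C) (hy : A.P y) := (Adjunction.ofIsLeftAdjoint _).comp_counit_app_bijective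
    (ObjectProperty.fullyFaithfulι A.P) ⟨y, hy⟩ t
  exact Triangle.eq_zero_of_comp_mor₁_surjective_of_injective _ hTr (hε x hx).2
    (hε _ (A.shift x (-1) hx)).1 f

end

end CategoryTheory

/-- If an admissible strictly full triangulated subcategory `A` of a pretriangulated
category `T` contains a spanning class `Ω` of `T`, then `A = T`. -/
theorem admissible_subcategory_containing_spanning_class_eq_top
    {T : Type*} [Category T] [HasZeroObject T] [Preadditive T]
    [HasShift T ℤ] [∀ n : ℤ, (CategoryTheory.shiftFunctor T n).Additive] [Pretriangulated T]
    (A : Triangulated.Subcategory T) [ObjectProperty.IsClosedUnderIsomorphisms A.P]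
    [(ObjectProperty.ι A.P).IsRightAdjoint] [(ObjectProperty.ι A.P).IsLeftAdjoint]
    (Ω : Set T) (hΩ : IsSpanningClass Ω) (hΩA : ∀ ω ∈ Ω, A.P ω) :
    ∀ t : T, A.P t := by
  intro t
  let adj := Adjunction.ofIsLeftAdjoint (ObjectProperty.ι A.P)
  obtain ⟨c, g, h, hTr⟩ := distinguished_cocone_triangle (adj.counit.app t)
  have hc : IsZero c := hΩ.2 c fun ω hω i =>
    A.hom_to_cone_counit_eq_zero hTr (A.shift ω i (hΩA ω hω))
  have : IsIso (adj.counit.app t) := (Triangle.isZero₃_iff_isIso₁ _ hTr).1 hc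
  exact ObjectProperty.prop_of_iso A.P (asIso (adj.counit.app t))
    ((ObjectProperty.ι A.P).rightAdjoint.obj t).property
end

section
/- Let m, n, d be integers with 2 ≤ m ≤ n ≤ d and d ≥ m + n, and let ζ ∈ k be a primitive d-th root of unity. If P ∈ k[x_1,…,x_m,y_1,…,y_n] is homogeneous of total degree d − m − n and satisfies σ_ζ(P) = ζ^{d−n} · P, then P = 0. -/
open MvPolynomial

/-- The `k`-algebra endomorphism of `k[x_1,…,x_m,y_1,…,y_n]` fixing the `x` variables and
scaling each `y` variable by `ζ`. -/
noncomputable def sigmaZeta (k : Type*) [Field k] (m n : ℕ) (ζ : k) :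
    MvPolynomial (Fin m ⊕ Fin n) k →ₐ[k] MvPolynomial (Fin m ⊕ Fin n) k :=
  aeval (Sum.elim (fun i => X (Sum.inl i)) (fun j => ζ • X (Sum.inr j)))

lemma sigmaZeta_monomial (k : Type*) [Field k] (m n : ℕ) (ζ : k)
    (s : (Fin m ⊕ Fin n) →₀ ℕ) (c : k) :
    sigmaZeta k m n ζ (monomial s c) =
      ζ ^ (∑ j : Fin n, s (Sum.inr j)) • monomial s c := by
  rw [sigmaZeta, aeval_monomial, Finsupp.prod_fintype _ _ (fun v => pow_zero _),
    Fintype.prod_sum_type]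
  simp only [Sum.elim_inl, Sum.elim_inr, smul_pow, smul_eq_C_mul, Finset.prod_mul_distrib, ← map_prod, Finset.prod_pow_eq_pow_sum]
  rw [monomial_eq, Finsupp.prod_fintype _ _ (fun v => pow_zero _), Fintype.prod_sum_type]
  simp only [algebraMap_eq, smul_eq_C_mul, map_pow]
  simp only [mul_pow]
  rw [Finset.prod_mul_distrib, Finset.prod_pow_eq_pow_sum]
  ring

lemma coeff_sigmaZeta (k : Type*) [Field k] (m n : ℕ) (ζ : k)
    (P : MvPolynomial (Fin m ⊕ Fin n) k) (t : (Fin m ⊕ Fin n) →₀ ℕ) :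
    coeff t (sigmaZeta k m n ζ P) = ζ ^ (∑ j : Fin n, t (Sum.inr j)) * coeff t P := by
  conv_lhs => rw [P.as_sum, map_sum]
  simp only [coeff_sum, sigmaZeta_monomial, coeff_smul, coeff_monomial, smul_eq_mul, mul_ite, mul_zero]
  rw [Finset.sum_ite_eq' P.support t]
  split_ifs with h
  · rfl
  · simp [notMem_support_iff.mp h]

/-- Vanishing of `H^0(P^{m+n-1}, O(d-m-n) ⊗ χ^{-n})^{μ_d}`: a homogeneous polynomial of
degree `d - m - n` on which `σ_ζ` acts by `ζ^{d-n}` is zero, when `2 ≤ m ≤ n ≤ d` and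
`d ≥ m + n`. -/
theorem no_invariant_sections_canonical (k : Type*) [Field k] (m n d : ℕ)
    (hm : 2 ≤ m) (hmn : m ≤ n) (hnd : n ≤ d) (hd : m + n ≤ d)
    (ζ : k) (hζ : IsPrimitiveRoot ζ d)
    (P : MvPolynomial (Fin m ⊕ Fin n) k)
    (hhom : P.IsHomogeneous (d - m - n))
    (heig : sigmaZeta k m n ζ P = ζ ^ (d - n) • P) :
    P = 0 := by
  ext t
  rw [coeff_zero]
  by_contra hc
  have h1 := congrArg (coeff t) heig
  rw [coeff_sigmaZeta, coeff_smul, smul_eq_mul] at h1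
  have h2 : ζ ^ (∑ j : Fin n, t (Sum.inr j)) = ζ ^ (d - n) := mul_right_cancel₀ hc h1
  have hdeg := hhom hc
  have htot : ∑ v : Fin m ⊕ Fin n, t v = d - m - n := by
    rw [← hdeg, Finsupp.weight_apply, Finsupp.sum_fintype]
    · simp
    · simp
  have hle : (∑ j : Fin n, t (Sum.inr j)) ≤ d - m - n := by
    rw [← htot, Fintype.sum_sum_type]
    exact Nat.le_add_left _ _
  have := hζ.pow_inj (by omega) (by omega) h2
  omega
end

section
/- Let k be a field, let d, n be integers with 1 ≤ n < d, let ζ ∈ k be a primitive d-th root of unity, and let m ≥ 2. Let V = (Fin (m−2) → k) × (Fin n → k) and let g : V → V be the k-linear automorphism which is the identity on the first factor and multiplication by ζ on the second factor. Then for every natural number s with s > m − 2, any ω ∈ ⋀^s V satisfying (⋀^s g)(ω) = ω is zero. -/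
open ExteriorAlgebra

/-- A linear map `f : M →ₗ[k] N` sends the `s`-th exterior power of `M` into that of `N`. -/
theorem exteriorPower_map_mem {k : Type*} [Field k] {M N : Type*} [AddCommGroup M] [Module k M]
    [AddCommGroup N] [Module k N] (s : ℕ) (f : M →ₗ[k] N) (x : ExteriorAlgebra k M)
    (hx : x ∈ ⋀[k]^s M) : ExteriorAlgebra.map f x ∈ ⋀[k]^s N := by
  have h : Submodule.map (ExteriorAlgebra.map f).toLinearMap (⋀[k]^s M) ≤ ⋀[k]^s N := by
    rw [Submodule.map_pow, ExteriorAlgebra.ι_range_map_map]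
    exact pow_le_pow_left' (LinearMap.map_le_range) s
  exact h ⟨x, hx, rfl⟩

/-- The map `⋀^s f` induced on `s`-th exterior powers by a linear map `f`. -/
noncomputable def exteriorPowerMap {k : Type*} [Field k] {M N : Type*} [AddCommGroup M]
    [Module k M] [AddCommGroup N] [Module k N] (s : ℕ) (f : M →ₗ[k] N) :
    ⋀[k]^s M →ₗ[k] ⋀[k]^s N :=
  (ExteriorAlgebra.map f).toLinearMap.restrict (fun x hx => exteriorPower_map_mem s f x hx)

/-!
In the eigenbasis `e₁, …, e_{m-2}, f₁, …, f_n` of `g`, the wedge of `s` distinct basis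
vectors containing `t` of the `f_j` is an eigenvector of `⋀^s g` with eigenvalue `ζ ^ t`.
As `s > m - 2` forces `t ≥ 1`, and `t ≤ n < d`, none of these eigenvalues is `1`; since such
wedges span `⋀^s V` and eigenspaces for distinct eigenvalues are independent, the
`1`-eigenspace is zero.
-/

open Module Finset

theorem exteriorPowerMap_eq_map {k : Type*} [Field k] {M N : Type*} [AddCommGroup M]
    [Module k M] [AddCommGroup N] [Module k N] (s : ℕ) (f : M →ₗ[k] N) :
    exteriorPowerMap s f = exteriorPower.map s f := by
  ext v
  simp only [exteriorPowerMap, LinearMap.compAlternatingMap_apply,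
    exteriorPower.ιMulti_apply_coe, exteriorPower.map_apply_ιMulti]
  exact ExteriorAlgebra.map_apply_ιMulti f v

theorem Module.End.eq_zero_of_mem_eigenspace_of_mem_iSup_eigenspace {R M ι : Type*} [CommRing R]
    [IsDomain R] [AddCommGroup M] [Module R M] [IsTorsionFree R M] (f : End R M) {a : R}
    {I : Set ι} {μ : ι → R} (ha : ∀ i ∈ I, μ i ≠ a) {x : M} (hxa : x ∈ f.eigenspace a)
    (hxI : x ∈ ⨆ i ∈ I, f.eigenspace (μ i)) : x = 0 := by
  rw [← iSup_image (g := f.eigenspace)] at hxI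
  have hdisj := f.eigenspaces_iSupIndep.disjoint_biSup (x := a) (y := μ '' I)
    (by rintro ⟨i, hi, rfl⟩; exact ha i hi rfl)
  exact Submodule.disjoint_def.1 hdisj x hxa hxI

theorem exteriorPower.ιMulti_mem_eigenspace_map {R M : Type*} [CommRing R] [AddCommGroup M]
    [Module R M] {n : ℕ} (f : End R M) {v : Fin n → M} {a : Fin n → R}
    (hv : ∀ i, f (v i) = a i • v i) :
    ιMulti R n v ∈ End.eigenspace (exteriorPower.map n f) (∏ i, a i) := by
  rw [End.mem_eigenspace_iff, exteriorPower.map_apply_ιMulti, ← AlternatingMap.map_smul_univ]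
  exact congrArg _ (funext hv)

theorem exteriorPower.top_le_iSup_eigenspace_map {K V α β : Type*} [Field K] [AddCommGroup V]
    [Module K V] [Fintype α] [Fintype β] (b : Basis (α ⊕ β) K V) (f : End K V) (z : K)
    (hα : ∀ i, f (b (.inl i)) = b (.inl i)) (hβ : ∀ j, f (b (.inr j)) = z • b (.inr j))
    {s : ℕ} (hs : Fintype.card α < s) :
    ⊤ ≤ ⨆ t ∈ Set.Icc 1 (Fintype.card β), End.eigenspace (exteriorPower.map s f) (z ^ t) := by
  classical
  rw [← exteriorPower.ιMulti_span_of_span K s V b.span_eq, Submodule.span_le]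
  rintro _ ⟨v, hv, rfl⟩
  obtain ⟨c, rfl⟩ := Set.range_subset_range_iff_exists_comp.1 hv
  by_cases hc : Function.Injective c
  swap
  · rw [AlternatingMap.map_eq_zero_of_not_injective _ _ (fun h => hc (h.of_comp))]
    exact zero_mem _
  set u := univ.image c
  have hfb : ∀ i, f (b (c i)) = Sum.elim (fun _ => 1) (fun _ => z) (c i) • b (c i) := by
    intro i
    rcases c i with j | j <;> simp [hα, hβ]
  have heig := exteriorPower.ιMulti_mem_eigenspace_map f hfb
  rw [← prod_image hc.injOn, prod_sum_eq_prod_toLeft_mul_prod_toRight] at heig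
  simp only [Sum.elim_inl, Sum.elim_inr, prod_const_one, prod_const, one_mul] at heig
  have hcard : #u.toLeft + #u.toRight = s := by
    rw [card_toLeft_add_card_toRight, card_image_of_injective _ hc, card_univ, Fintype.card_fin]
  have hleft : #u.toLeft ≤ Fintype.card α := card_le_univ _
  have hright : #u.toRight ≤ Fintype.card β := card_le_univ _
  exact Submodule.mem_iSup_of_mem #u.toRight (Submodule.mem_iSup_of_mem ⟨by omega, hright⟩ heig)

theorem invariants_exterior_power_vanish_general (k : Type*) [Field k] (d n : ℕ)
    (hnd : n < d) (ζ : k) (hζ : IsPrimitiveRoot ζ d) (m : ℕ)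
    (g : ((Fin (m - 2) → k) × (Fin n → k)) →ₗ[k] ((Fin (m - 2) → k) × (Fin n → k)))
    (hg : g = LinearMap.prodMap (LinearMap.id) (ζ • LinearMap.id))
    (s : ℕ) (hs : m - 2 < s)
    (ω : ⋀[k]^s ((Fin (m - 2) → k) × (Fin n → k)))
    (hω : exteriorPowerMap s g ω = ω) :
    ω = 0 := by
  have hspan := exteriorPower.top_le_iSup_eigenspace_map
    ((Pi.basisFun k (Fin (m - 2))).prod (Pi.basisFun k (Fin n))) g ζ
    (by simp [hg]) (by simp [hg]) (by simpa using hs)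
  rw [Fintype.card_fin] at hspan
  refine End.eq_zero_of_mem_eigenspace_of_mem_iSup_eigenspace _ (a := 1)
    (fun t ht => hζ.pow_ne_one_of_pos_of_lt (Nat.one_le_iff_ne_zero.1 ht.1)
      (ht.2.trans_lt hnd)) ?_
    (hspan Submodule.mem_top)
  rwa [End.mem_eigenspace_iff, one_smul, ← exteriorPowerMap_eq_map]

/-- For `1 ≤ n < d`, `ζ` a primitive `d`-th root of unity, `m ≥ 2`, and
`g = id ⊕ (ζ • id)` on `V = k^{m-2} × k^n`: every `g`-invariant element of `⋀^s V`
vanishes when `s > m - 2`.  This is the computation `(Λ^s(1^{⊕ m-2} ⊕ χ^{⊕ n}))^{μ_d} = 0`. -/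
theorem invariants_exterior_power_vanish (k : Type*) [Field k] (d n : ℕ)
    (hn : 1 ≤ n) (hnd : n < d) (ζ : k) (hζ : IsPrimitiveRoot ζ d) (m : ℕ) (hm : 2 ≤ m)
    (g : ((Fin (m - 2) → k) × (Fin n → k)) →ₗ[k] ((Fin (m - 2) → k) × (Fin n → k)))
    (hg : g = LinearMap.prodMap (LinearMap.id) (ζ • LinearMap.id))
    (s : ℕ) (hs : m - 2 < s)
    (ω : ⋀[k]^s ((Fin (m - 2) → k) × (Fin n → k)))
    (hω : exteriorPowerMap s g ω = ω) :
    ω = 0 :=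
  invariants_exterior_power_vanish_general k d n hnd ζ hζ m g hg s hs ω hω
end

section
/- Let k be a field, let d, n be integers with 1 ≤ n < d, let ζ ∈ k be a primitive d-th root of unity, and let m ≥ 2. Let V = (Fin (m−2) → k) × (Fin n → k) and let g : V → V be the k-linear automorphism which is the identity on the first factor and multiplication by ζ on the second factor. Then for every natural number s and every integer t with 0 < t < d − n, any ω ∈ ⋀^s V satisfying (⋀^s g)(ω) = ζ^{d−t} · ω is zero. -/
/-!
Write `V = U × W` with `g = id × ζ`. Splitting each factor of a wedge `v₁ ∧ ⋯ ∧ vₛ` into its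
`U`- and `W`-components and expanding multilinearly, every element of `⋀^s V` is a sum of wedges
whose factors each lie in `U` or in `W`. Such a wedge vanishes if more than `dim W = n` of its
factors lie in `W`; otherwise it is an eigenvector of `⋀^s g` with eigenvalue `ζ^j`, `j ≤ n`.
As `n < d - t < d`, the eigenvalue `ζ^(d-t)` is none of these, and eigenspaces for distinct
eigenvalues are independent.
-/

open ExteriorAlgebra

open Module

section

variable {k M : Type*} [Field k] [AddCommGroup M] [Module k M]

theorem ιMulti_eq_zero_of_finrank_lt {s : ℕ} (W : Submodule k M) [FiniteDimensional k W]
    (v : Fin s → M) (T : Finset (Fin s)) (hT : ∀ i ∈ T, v i ∈ W) (hcard : finrank k W < T.card) :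
    ιMulti k s v = 0 := by
  refine AlternatingMap.map_linearDependent _ v fun hv => hcard.not_ge ?_
  have hvT : LinearIndependent k (W.subtype ∘ fun i : T => (⟨v i, hT i i.2⟩ : W)) :=
    hv.comp _ Subtype.val_injective
  simpa using (LinearIndependent.of_comp _ hvT).fintype_card_le_finrank

theorem map_ιMulti_of_forall_eq_smul {s : ℕ} (f : M →ₗ[k] M) (v : Fin s → M) (c : Fin s → k)
    (hv : ∀ i, f (v i) = c i • v i) :
    ExteriorAlgebra.map f (ιMulti k s v) = (∏ i, c i) • ιMulti k s v := by
  rw [map_apply_ιMulti, ← AlternatingMap.map_smul_univ]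
  exact congrArg _ (funext hv)

theorem Module.End.eq_zero_of_mem_eigenspace_of_mem_iSup {ι : Type*} (f : End k M) {μ : k}
    {x : M} (p : ι → Prop) (ν : ι → k) (hν : ∀ i, p i → ν i ≠ μ) (hx : x ∈ f.eigenspace μ)
    (hx' : x ∈ ⨆ (i) (_ : p i), f.eigenspace (ν i)) : x = 0 := by
  have hle : ⨆ (i) (_ : p i), f.eigenspace (ν i) ≤ ⨆ (ν') (_ : ν' ≠ μ), f.eigenspace ν' :=
    iSup₂_le fun i hi => le_iSup₂_of_le (ν i) (hν i hi) le_rfl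
  exact (f.eigenspaces_iSupIndep μ).le_bot ⟨hx, hle hx'⟩

theorem exteriorPower_prod_le_iSup_eigenspace {U W : Type*} [AddCommGroup U] [Module k U]
    [AddCommGroup W] [Module k W] [FiniteDimensional k W] (s : ℕ) (c : k) :
    ⋀[k]^s (U × W) ≤ ⨆ (j : ℕ) (_ : j ≤ finrank k W),
      End.eigenspace
        (ExteriorAlgebra.map
          (LinearMap.prodMap (LinearMap.id : U →ₗ[k] U) (c • LinearMap.id : W →ₗ[k] W))).toLinearMap
        (c ^ j) := by
  set g : U × W →ₗ[k] U × W := LinearMap.prodMap LinearMap.id (c • LinearMap.id)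
  rw [← ιMulti_span_fixedDegree, Submodule.span_le]
  rintro _ ⟨v, rfl⟩
  let a : Fin s → U × W := fun i => ((v i).1, 0)
  let b : Fin s → U × W := fun i => (0, (v i).2)
  have hv : v = a + b := funext fun i => by simp [a, b]
  rw [SetLike.mem_coe, hv, AlternatingMap.map_add_univ]
  refine Submodule.sum_mem _ fun S _ => ?_
  by_cases hcard : finrank k W < Sᶜ.card
  · have hinr : finrank k (LinearMap.range (LinearMap.inr k U W)) = finrank k W :=
      LinearMap.finrank_range_of_inj LinearMap.inr_injective
    rw [ιMulti_eq_zero_of_finrank_lt _ _ Sᶜ (fun i hi => ?_) (hinr ▸ hcard)]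
    · exact zero_mem _
    · rw [Finset.piecewise_eq_of_notMem _ _ _ (Finset.mem_compl.1 hi)]
      exact ⟨(v i).2, rfl⟩
  · have hfactor_eigen : ∀ i, g (S.piecewise a b i) = (if i ∈ S then 1 else c) • S.piecewise a b i := by
      intro i
      by_cases hi : i ∈ S <;> simp [hi, g, a, b]
    refine Submodule.mem_iSup_of_mem Sᶜ.card (Submodule.mem_iSup_of_mem (by omega) ?_)
    rw [End.mem_eigenspace_iff, AlgHom.toLinearMap_apply,
      map_ιMulti_of_forall_eq_smul g _ _ hfactor_eigen]
    simp [Finset.prod_ite, Finset.filter_not, Finset.compl_eq_univ_sdiff]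

end

theorem eigenspace_exterior_power_vanish_general (k : Type*) [Field k] (d n : ℕ)
    (ζ : k) (hζ : IsPrimitiveRoot ζ d) (m : ℕ)
    (g : ((Fin (m - 2) → k) × (Fin n → k)) →ₗ[k] ((Fin (m - 2) → k) × (Fin n → k)))
    (hg : g = LinearMap.prodMap (LinearMap.id) (ζ • LinearMap.id))
    (s : ℕ) (t : ℕ) (ht0 : 0 < t) (htd : t < d - n)
    (ω : ⋀[k]^s ((Fin (m - 2) → k) × (Fin n → k)))
    (hω : exteriorPowerMap s g ω = ζ ^ (d - t) • ω) :
    ω = 0 := by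
  subst hg
  have hsum := exteriorPower_prod_le_iSup_eigenspace s ζ ω.2
  rw [finrank_fin_fun] at hsum
  have hdistinct : ∀ j ≤ n, ζ ^ j ≠ ζ ^ (d - t) := fun j hj h => by
    have := hζ.pow_inj (by omega) (by omega) h
    omega
  exact Subtype.ext <| End.eq_zero_of_mem_eigenspace_of_mem_iSup _ _ _ hdistinct
    (End.mem_eigenspace_iff.2 (congrArg Subtype.val hω)) hsum

/-- For `1 ≤ n < d`, `ζ` a primitive `d`-th root of unity, `m ≥ 2`, `g = id ⊕ (ζ • id)` on
`V = k^{m-2} × k^n`, and `0 < t < d - n`: every element of `⋀^s V` on which `⋀^s g` acts by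
`ζ^{d-t}` vanishes.  This is `(Λ^s(1^{⊕ m-2} ⊕ χ^{⊕ n}) ⊗ χ^t)^{μ_d} = 0`. -/
theorem eigenspace_exterior_power_vanish (k : Type*) [Field k] (d n : ℕ)
    (hn : 1 ≤ n) (hnd : n < d) (ζ : k) (hζ : IsPrimitiveRoot ζ d) (m : ℕ) (hm : 2 ≤ m)
    (g : ((Fin (m - 2) → k) × (Fin n → k)) →ₗ[k] ((Fin (m - 2) → k) × (Fin n → k)))
    (hg : g = LinearMap.prodMap (LinearMap.id) (ζ • LinearMap.id))
    (s : ℕ) (t : ℕ) (ht0 : 0 < t) (htd : t < d - n)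
    (ω : ⋀[k]^s ((Fin (m - 2) → k) × (Fin n → k)))
    (hω : exteriorPowerMap s g ω = ζ ^ (d - t) • ω) :
    ω = 0 :=
  eigenspace_exterior_power_vanish_general k d n ζ hζ m g hg s t ht0 htd ω hω
end
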